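/- For any system parameters kp, γp, γr > 0 and controller gains k1, k2 ∈ ℝ, the closed-loop state matrix Acl = [[−γr, −k1, k2], [kp, −γp, 0], [0, −1, 0]] is Hurwitz (all eigenvalues over ℂ have negative real part) if and only if k1 > k2/(γp + γr) − γp·γr/kp and k2 > 0. -/

import Mathlib

/-!
The characteristic polynomial of `Acl` is `λ³ + (γr + γp) λ² + (γp γr + k1 kp) λ + k2 kp`, so the
claim is the Routh–Hurwitz criterion for a monic real cubic `z³ + a z² + b z + c`: all roots lie in
the open left half-plane iff `a > 0`, `c > 0` and `a b > c`.

Sufficiency is a computation with the real and imaginary parts of a root. For necessity, a real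
cubic has a real root `r`, which must be negative; the roots of the quotient
`z² + (a + r) z + (b + a r + r²)` also have negative real parts, which forces both of its
coefficients to be positive, and `c`, `a` and `a b - c` are positive expressions in `r` and these
two coefficients.
-/

/-- A real square matrix is Hurwitz if all of its eigenvalues over `ℂ` have
negative real part. -/
def IsHurwitz {n : ℕ} (A : Matrix (Fin n) (Fin n) ℝ) : Prop :=
  ∀ μ ∈ spectrum ℂ (A.map Complex.ofReal), μ.re < 0

lemma exists_cubic_eq_zero (a b c : ℝ) : ∃ r : ℝ, r ^ 3 + a * r ^ 2 + b * r + c = 0 := by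
  set M : ℝ := 1 + |a| + |b| + |c|
  have hM : 1 ≤ M := by simp only [M]; linarith [abs_nonneg a, abs_nonneg b, abs_nonneg c]
  have hM2 : 0 ≤ M ^ 2 := sq_nonneg M
  have hdom : |a| * M ^ 2 + |b| * M + |c| < M ^ 3 := by
    nlinarith [abs_nonneg a, abs_nonneg b, abs_nonneg c,
      mul_le_mul_of_nonneg_left hM (abs_nonneg b)]
  have hneg : (-M) ^ 3 + a * (-M) ^ 2 + b * (-M) + c < 0 := by
    nlinarith [mul_le_mul_of_nonneg_right (le_abs_self a) hM2,
      mul_le_mul_of_nonneg_right (neg_abs_le b) (by linarith : 0 ≤ M), le_abs_self c]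
  have hpos : 0 < M ^ 3 + a * M ^ 2 + b * M + c := by
    nlinarith [mul_le_mul_of_nonneg_right (neg_abs_le a) hM2,
      mul_le_mul_of_nonneg_right (neg_abs_le b) (by linarith : 0 ≤ M), neg_abs_le c]
  have hcont : ContinuousOn (fun x : ℝ ↦ x ^ 3 + a * x ^ 2 + b * x + c) (Set.Icc (-M) M) := by
    fun_prop
  obtain ⟨r, -, hr⟩ := intermediate_value_Icc (by linarith) hcont ⟨hneg.le, hpos.le⟩
  exact ⟨r, hr⟩

lemma pos_of_quadratic_roots_re_neg {p q : ℝ}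
    (h : ∀ z : ℂ, z ^ 2 + p * z + q = 0 → z.re < 0) : 0 < p ∧ 0 < q := by
  obtain ⟨s, hs⟩ := IsAlgClosed.exists_eq_mul_self (discrim 1 (p : ℂ) q)
  obtain ⟨z, hz⟩ := exists_quadratic_eq_zero one_ne_zero ⟨s, hs⟩
  replace hz : z ^ 2 + p * z + q = 0 := by linear_combination hz
  have hw : (-p - z) ^ 2 + p * (-p - z) + q = 0 := by linear_combination hz
  have hz_re := h z hz
  have hw_re := h _ hw
  -- `q` is the product of the roots `z` and `-p - z`, whose imaginary parts are opposite.
  have hq : (q : ℂ) = z * (-p - z) := by linear_combination hz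
  have hq_re := congrArg Complex.re hq
  simp only [Complex.ofReal_re, Complex.mul_re, Complex.sub_re, Complex.neg_re, Complex.sub_im,
    Complex.neg_im, Complex.ofReal_im] at hq_re hw_re
  constructor <;> nlinarith [sq_nonneg z.im]

lemma re_neg_of_cubic_eq_zero {a b c : ℝ} (ha : 0 < a) (hc : 0 < c) (hab : c < a * b) {z : ℂ}
    (hz : z ^ 3 + a * z ^ 2 + b * z + c = 0) : z.re < 0 := by
  by_contra! hx
  obtain ⟨x, y⟩ := z
  have hb : 0 < b := by nlinarith
  have hre := congrArg Complex.re hz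
  have him := congrArg Complex.im hz
  simp only [pow_succ, pow_zero, one_mul, Complex.add_re, Complex.mul_re, Complex.mul_im,
    Complex.add_im, Complex.ofReal_re, Complex.ofReal_im, Complex.zero_re, Complex.zero_im]
    at hre him hx
  have him' : y * (3 * x ^ 2 - y ^ 2 + 2 * a * x + b) = 0 := by linear_combination him
  rcases mul_eq_zero.mp him' with rfl | hy
  · nlinarith
  -- Substituting `y²` turns the real part into `-8x³ - 8ax² - 2(a² + b)x + (c - ab) < 0`.
  · have hy2 : y ^ 2 = 3 * x ^ 2 + 2 * a * x + b := by linear_combination -hy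
    nlinarith [pow_nonneg hx 3, mul_nonneg ha.le (sq_nonneg x), mul_nonneg hb.le hx,
      mul_nonneg (mul_nonneg ha.le ha.le) hx]

lemma routh_hurwitz_of_cubic_roots_re_neg {a b c : ℝ}
    (h : ∀ z : ℂ, z ^ 3 + a * z ^ 2 + b * z + c = 0 → z.re < 0) :
    0 < a ∧ 0 < c ∧ c < a * b := by
  obtain ⟨r, hr⟩ := exists_cubic_eq_zero a b c
  have hr_neg : r < 0 := by simpa using h r (by exact_mod_cast hr)
  obtain ⟨hp, hq⟩ : 0 < a + r ∧ 0 < b + a * r + r ^ 2 := by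
    refine pos_of_quadratic_roots_re_neg fun z hz ↦ h z ?_
    have hrC : (r : ℂ) ^ 3 + a * r ^ 2 + b * r + c = 0 := by exact_mod_cast hr
    push_cast at hz
    linear_combination (z - r) * hz + hrC
  refine ⟨by linarith, by nlinarith, ?_⟩
  nlinarith [mul_pos hp hq, mul_pos (mul_pos hp hp) (neg_pos.mpr hr_neg)]

theorem cubic_roots_re_neg_iff (a b c : ℝ) :
    (∀ z : ℂ, z ^ 3 + a * z ^ 2 + b * z + c = 0 → z.re < 0) ↔ 0 < a ∧ 0 < c ∧ c < a * b :=
  ⟨routh_hurwitz_of_cubic_roots_re_neg, fun ⟨ha, hc, hab⟩ _ ↦ re_neg_of_cubic_eq_zero ha hc hab⟩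

lemma mem_spectrum_closedLoop_iff (kp γp γr k1 k2 : ℝ) (μ : ℂ) :
    μ ∈ spectrum ℂ ((!![-γr, -k1, k2; kp, -γp, 0; 0, -1, 0] : Matrix (Fin 3) (Fin 3) ℝ).map
      Complex.ofReal) ↔
      μ ^ 3 + ↑(γr + γp) * μ ^ 2 + ↑(γp * γr + k1 * kp) * μ + ↑(k2 * kp) = 0 := by
  rw [spectrum.mem_iff, Matrix.isUnit_iff_isUnit_det, isUnit_iff_ne_zero, not_ne_iff]
  push_cast
  simp only [Matrix.det_fin_three, Matrix.sub_apply, Matrix.algebraMap_matrix_apply,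
    Matrix.map_apply, Matrix.of_apply, Matrix.cons_val', Matrix.cons_val_zero, Matrix.cons_val_one,
    Matrix.cons_val, Matrix.cons_val_fin_one, Complex.ofReal_neg, Complex.ofReal_zero,
    Complex.ofReal_one, Fin.reduceEq, if_true, if_false, Algebra.algebraMap_self, RingHom.id_apply]
  constructor <;> intro h <;> linear_combination h

theorem stmt0 (kp γp γr k1 k2 : ℝ) (hkp : 0 < kp) (hγp : 0 < γp) (hγr : 0 < γr) :
    IsHurwitz !![-γr, -k1, k2; kp, -γp, 0; 0, -1, 0] ↔
      (k1 > k2 / (γp + γr) - γp * γr / kp ∧ k2 > 0) := by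
  have hsum : 0 < γp + γr := by positivity
  have hurwitz_iff : IsHurwitz !![-γr, -k1, k2; kp, -γp, 0; 0, -1, 0] ↔
      0 < γr + γp ∧ 0 < k2 * kp ∧ k2 * kp < (γr + γp) * (γp * γr + k1 * kp) := by
    rw [← cubic_roots_re_neg_iff]
    exact forall_congr' fun μ ↦ by rw [mem_spectrum_closedLoop_iff]
  rw [hurwitz_iff, gt_iff_lt, div_sub_div _ _ hsum.ne' hkp.ne', div_lt_iff₀ (by positivity),
    mul_pos_iff_of_pos_right hkp]
  constructor
  · rintro ⟨-, hk2, h⟩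
    exact ⟨by linarith, hk2⟩
  · rintro ⟨h, hk2⟩
    exact ⟨by linarith, hk2, by linarith⟩
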